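/- arXiv:2112.13477 — 2 statements merged into one kernel-verified Lean document; each statement's English description precedes it below -/
import Mathlib

section
/- For a logic program P and interpretation J, J is a stable model of P if and only if ⟨J, J⟩ is an HT-model of P and for all I ⊊ J, ⟨I, J⟩ is not an HT-model of P. -/
inductive Lit (α : Type) where
  | pos : α → Lit α
  | neg : α → Lit α

structure Rule (α : Type) where
  head : Set (Lit α)
  body : Set (Lit α)

def litSat {α : Type} (J : Set α) : Lit α → Prop
  | .pos a => a ∈ J
  | .neg a => a ∉ J

def ruleSat {α : Type} (J : Set α) (π : Rule α) : Prop :=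
  (∃ L ∈ π.body, ¬ litSat J L) ∨ (∃ L ∈ π.head, litSat J L)

def progSat {α : Type} (J : Set α) (P : Set (Rule α)) : Prop :=
  ∀ π ∈ P, ruleSat J π

/-- A rule is kept in the reduct w.r.t. `J` iff `J` does not satisfy the rule `(∼H⁻, ∼B⁻)`. -/
def kept {α : Type} (J : Set α) (π : Rule α) : Prop :=
  (∀ a : α, Lit.neg a ∈ π.body → a ∉ J) ∧ (∀ a : α, Lit.neg a ∈ π.head → a ∈ J)

/-- The positive-part rule `(H⁺, B⁺)`. -/
def reductRule {α : Type} (π : Rule α) : Rule α :=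
  ⟨{L ∈ π.head | ∃ a, L = Lit.pos a}, {L ∈ π.body | ∃ a, L = Lit.pos a}⟩

def reduct {α : Type} (J : Set α) (P : Set (Rule α)) : Set (Rule α) :=
  {ρ | ∃ π ∈ P, kept J π ∧ ρ = reductRule π}

/-- `J` is a stable model of `P`: a subset-minimal classical model of the reduct `P^J`. -/
def stableModel {α : Type} (P : Set (Rule α)) (J : Set α) : Prop :=
  progSat J (reduct J P) ∧ ∀ I : Set α, progSat I (reduct J P) → ¬ I ⊂ J

/-- `⟨I, J⟩` is an RE-model of rule `π` iff `I ⊨ π^J`. -/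
def reRule {α : Type} (π : Rule α) (I J : Set α) : Prop :=
  kept J π → ruleSat I (reductRule π)

/-- `⟨I, J⟩` is an HT-model of rule `π` iff `J ⊨ π` and `I ⊨ π^J`. -/
def htRule {α : Type} (π : Rule α) (I J : Set α) : Prop :=
  ruleSat J π ∧ reRule π I J

def htProg {α : Type} (P : Set (Rule α)) (I J : Set α) : Prop :=
  ∀ π ∈ P, htRule π I J

def reProg {α : Type} (P : Set (Rule α)) (I J : Set α) : Prop :=
  ∀ π ∈ P, reRule π I J

def negLit {α : Type} : Lit α → Lit α
  | .pos a => .neg a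
  | .neg a => .pos a

/-- Rules `π`, `σ` are in conflict iff `head π ≠ ∅` and `head π = ∼ head σ`. -/
def conflict {α : Type} (π σ : Rule α) : Prop :=
  π.head ≠ ∅ ∧ π.head = negLit '' σ.head

def bodySat {α : Type} (J : Set α) (σ : Rule α) : Prop :=
  ∀ L ∈ σ.body, litSat J L

/-! If `π` is not kept in the reduct `P^J`, then `J` satisfies one of its negative literals and
hence `π` itself; if it is kept, `π^J` is `π` with some literals removed. So `J ⊨ P^J` already
gives `J ⊨ P`, and then the HT-models `⟨I, J⟩` of `P` are exactly the pairs with `I ⊨ P^J`: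
minimality of `J` among models of `P^J` is minimality among HT-models. -/

section

variable {α : Type}

theorem ruleSat_mono {J : Set α} {ρ π : Rule α} (hhead : ρ.head ⊆ π.head)
    (hbody : ρ.body ⊆ π.body) : ruleSat J ρ → ruleSat J π := by
  rintro (⟨L, hL, hf⟩ | ⟨L, hL, ht⟩)
  · exact Or.inl ⟨L, hbody hL, hf⟩
  · exact Or.inr ⟨L, hhead hL, ht⟩

theorem ruleSat_of_ruleSat_reductRule {J : Set α} {π : Rule α} :
    ruleSat J (reductRule π) → ruleSat J π :=
  ruleSat_mono (fun _ hL => hL.1) (fun _ hL => hL.1)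

theorem ruleSat_of_not_kept {J : Set α} {π : Rule α} (h : ¬ kept J π) : ruleSat J π := by
  simp only [kept, not_and_or, not_forall, not_not] at h
  rcases h with ⟨a, ha, haJ⟩ | ⟨a, ha, haJ⟩
  · exact Or.inl ⟨.neg a, ha, not_not.2 haJ⟩
  · exact Or.inr ⟨.neg a, ha, haJ⟩

theorem ruleSat_of_reRule_self {J : Set α} {π : Rule α} (h : reRule π J J) : ruleSat J π := by
  by_cases hk : kept J π
  · exact ruleSat_of_ruleSat_reductRule (h hk)
  · exact ruleSat_of_not_kept hk

theorem progSat_reduct_iff {P : Set (Rule α)} {I J : Set α} :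
    progSat I (reduct J P) ↔ reProg P I J := by
  constructor
  · intro h π hπ hk
    exact h (reductRule π) ⟨π, hπ, hk, rfl⟩
  · rintro h ρ ⟨π, hπ, hk, rfl⟩
    exact h π hπ hk

theorem htProg_iff {P : Set (Rule α)} {I J : Set α} :
    htProg P I J ↔ progSat J P ∧ reProg P I J :=
  forall₂_and

theorem htProg_iff_of_reProg_self {P : Set (Rule α)} {I J : Set α} (hJ : reProg P J J) :
    htProg P I J ↔ reProg P I J := by
  rw [htProg_iff, and_iff_right_iff_imp]
  exact fun _ π hπ => ruleSat_of_reRule_self (hJ π hπ)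

end

/-- `J` is a stable model of `P` iff `⟨J, J⟩` is an HT-model of `P`
and no `⟨I, J⟩` with `I ⊊ J` is an HT-model of `P`. -/
theorem stmt5 {α : Type} (P : Set (Rule α)) (J : Set α) :
    stableModel P J ↔ (htProg P J J ∧ ∀ I : Set α, I ⊂ J → ¬ htProg P I J) := by
  simp only [stableModel, progSat_reduct_iff]
  constructor
  · rintro ⟨hJ, hmin⟩
    refine ⟨(htProg_iff_of_reProg_self hJ).2 hJ, fun I hIJ hI => ?_⟩
    exact hmin I ((htProg_iff_of_reProg_self hJ).1 hI) hIJ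
  · rintro ⟨hJ, hmin⟩
    have hJ' : reProg P J J := (htProg_iff.1 hJ).2
    exact ⟨hJ', fun I hI hIJ => hmin I hIJ ((htProg_iff_of_reProg_self hJ').2 hI)⟩
end

section
/- The JU-semantics and the AS-semantics coincide on dynamic logic programs of length two: for any DLP P = ⟨P₀, P₁⟩, the set of JU-models of P equals the set of AS-models of P. -/
def allRules {α : Type} {n : ℕ} (P : Fin n → Set (Rule α)) : Set (Rule α) :=
  ⋃ i, P i

/-- JU-rejected rules of a DLP. -/
def rejJU {α : Type} {n : ℕ} (P : Fin n → Set (Rule α)) (J : Set α) : Set (Rule α) :=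
  {π | ∃ i j : Fin n, i < j ∧ π ∈ P i ∧ ∃ σ ∈ P j, conflict π σ ∧ bodySat J σ}

/-- AS-rejected rules of component `i` of a DLP (rejected rules cannot reject). -/
def rejAS {α : Type} {n : ℕ} (P : Fin n → Set (Rule α)) (J : Set α) (i : Fin n) :
    Set (Rule α) :=
  {π | π ∈ P i ∧ ∃ j : Fin n, ∃ _ : i < j,
    ∃ σ, σ ∈ P j ∧ σ ∉ rejAS P J j ∧ conflict π σ ∧ bodySat J σ}
termination_by n - i.val
decreasing_by
  have := j.isLt
  simp only [Fin.lt_def] at *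
  omega

def rejASall {α : Type} {n : ℕ} (P : Fin n → Set (Rule α)) (J : Set α) : Set (Rule α) :=
  ⋃ i, rejAS P J i

theorem rejAS_last {α : Type} {n : ℕ} (P : Fin (n + 1) → Set (Rule α)) (J : Set α) :
    rejAS P J (Fin.last n) = ∅ := by
  refine Set.eq_empty_of_forall_notMem fun π hπ => ?_
  rw [rejAS] at hπ
  obtain ⟨-, j, hlt, -⟩ := hπ
  exact (Fin.le_last j).not_gt hlt

theorem rejASall_subset_rejJU {α : Type} {n : ℕ} (P : Fin n → Set (Rule α)) (J : Set α) :
    rejASall P J ⊆ rejJU P J := by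
  intro π hπ
  obtain ⟨i, hi⟩ := Set.mem_iUnion.1 hπ
  rw [rejAS] at hi
  obtain ⟨hπi, j, hij, σ, hσ, -, hc, hb⟩ := hi
  exact ⟨i, j, hij, hπi, σ, hσ, hc, hb⟩

-- With two components every rejecting rule lies in `P 1`, which nothing can reject.
theorem rejJU_subset_rejASall {α : Type} (P : Fin 2 → Set (Rule α)) (J : Set α) :
    rejJU P J ⊆ rejASall P J := by
  rintro π ⟨i, j, hij, hπi, σ, hσ, hc, hb⟩
  obtain rfl : i = 0 := by omega
  obtain rfl : j = 1 := by omega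
  refine Set.mem_iUnion.2 ⟨0, ?_⟩
  rw [rejAS]
  exact ⟨hπi, 1, hij, σ, hσ, (rejAS_last P J).symm ▸ Set.notMem_empty σ, hc, hb⟩

theorem rejJU_eq_rejASall {α : Type} (P : Fin 2 → Set (Rule α)) (J : Set α) :
    rejJU P J = rejASall P J :=
  (rejJU_subset_rejASall P J).antisymm (rejASall_subset_rejJU P J)

/-- The JU- and AS-semantics coincide on DLPs of length two: `J` is a JU-model of
`⟨P₀, P₁⟩` iff it is an AS-model. -/
theorem stmt8 {α : Type} (P : Fin 2 → Set (Rule α)) (J : Set α) :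
    stableModel (allRules P \ rejJU P J) J ↔
    stableModel (allRules P \ rejASall P J) J := by
  rw [rejJU_eq_rejASall]
end
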